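/- Let m be a positive integer and let k, k' be integers with 0 ≤ k, k' ≤ m/2. There exists a positive integer d ≤ m with (3^k+1)·3^d ≡ 3^{k'}+1 (mod 3^m-1) if and only if k = k'. -/

import Mathlib

/-!
Since `3 ^ m ≡ 1`, exponents can be reduced mod `m`, so the left side is congruent to
`3 ^ ((k + d) % m) + 3 ^ (d % m)`. For `m ≥ 2` both this and `3 ^ k' + 1` lie below `3 ^ m - 1`,
so the congruence is an equality, and uniqueness of base-3 digits forces
`{(k + d) % m, d % m} = {k', 0}`. As `0 < d ≤ m` and `k, k' ≤ m / 2`, this only happens for `k = k'`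
(either `d = m`, or `d = k'` and `k + k' = m`).
-/

namespace Nat

variable {p m a b c k k' d : ℕ}

theorem pow_modEq_pow_mod (hp : 0 < p) : p ^ a ≡ p ^ (a % m) [MOD p ^ m - 1] := by
  have hpm : p ^ m ≡ 1 [MOD p ^ m - 1] := modEq_sub (one_le_pow _ _ hp)
  calc p ^ a = (p ^ m) ^ (a / m) * p ^ (a % m) := by rw [← pow_mul, ← pow_add, div_add_mod]
    _ ≡ 1 ^ (a / m) * p ^ (a % m) [MOD p ^ m - 1] := (hpm.pow _).mul_right _
    _ = p ^ (a % m) := by rw [one_pow, one_mul]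

theorem pow_add_pow_eq_pow_add_one (hp : 2 ≤ p) (h : p ^ a + p ^ b = p ^ c + 1) :
    (a = c ∧ b = 0) ∨ (a = 0 ∧ b = c) := by
  rcases eq_or_ne b 0 with rfl | hb
  · exact .inl ⟨Nat.pow_right_injective hp (show p ^ a = p ^ c by simpa using h), rfl⟩
  rcases eq_or_ne a 0 with rfl | ha
  · exact .inr ⟨rfl, Nat.pow_right_injective hp (show p ^ b = p ^ c by rw [pow_zero] at h; omega)⟩
  exfalso
  rcases eq_or_ne c 0 with rfl | hc
  · have := Nat.pow_le_pow_right (by omega : 0 < p) (one_le_iff_ne_zero.2 ha)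
    have := Nat.pow_le_pow_right (by omega : 0 < p) (one_le_iff_ne_zero.2 hb)
    simp only [pow_one, pow_zero] at *
    omega
  · have hdvd : p ∣ p ^ c + 1 := h ▸ dvd_add (dvd_pow_self p ha) (dvd_pow_self p hb)
    have := le_of_dvd one_pos ((Nat.dvd_add_right (dvd_pow_self p hc)).1 hdvd)
    omega

theorem pow_add_pow_lt_pow_sub_one (hp : 3 ≤ p) (hm : 2 ≤ m) (ha : a < m) (hb : b < m) :
    p ^ a + p ^ b < p ^ m - 1 := by
  have hpa := Nat.pow_le_pow_right (by omega : 0 < p) (le_sub_one_of_lt ha)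
  have hpb := Nat.pow_le_pow_right (by omega : 0 < p) (le_sub_one_of_lt hb)
  have hlow : p ≤ p ^ (m - 1) := le_self_pow (by omega) p
  have hpm : p ^ m = p * p ^ (m - 1) := by rw [← _root_.pow_succ', Nat.sub_add_cancel (by omega)]
  have : 3 * p ^ (m - 1) ≤ p * p ^ (m - 1) := Nat.mul_le_mul_right _ hp
  omega

theorem mod_pair_of_pow_add_one_mul_pow_modEq (hp : 3 ≤ p) (hm : 2 ≤ m)
    (hk' : k' < m) (h : (p ^ k + 1) * p ^ d ≡ p ^ k' + 1 [MOD p ^ m - 1]) :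
    ((k + d) % m = k' ∧ d % m = 0) ∨ ((k + d) % m = 0 ∧ d % m = k') := by
  have hreduce : (p ^ k + 1) * p ^ d ≡ p ^ ((k + d) % m) + p ^ (d % m) [MOD p ^ m - 1] := by
    rw [add_mul, one_mul, ← pow_add]
    exact (pow_modEq_pow_mod (by omega)).add (pow_modEq_pow_mod (by omega))
  have hlt (x y : ℕ) (hx : x < m) (hy : y < m) := pow_add_pow_lt_pow_sub_one hp hm hx hy
  have heq := (hreduce.symm.trans h).eq_of_lt_of_lt
    (hlt _ _ (mod_lt _ (by omega)) (mod_lt _ (by omega))) (hlt k' 0 hk' (by omega))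
  exact pow_add_pow_eq_pow_add_one (by omega) heq

theorem eq_of_mod_pair_eq (hd : 0 < d) (hdm : d ≤ m) (hk : k ≤ m / 2) (hk' : k' ≤ m / 2)
    (h : ((k + d) % m = k' ∧ d % m = 0) ∨ ((k + d) % m = 0 ∧ d % m = k')) : k = k' := by
  obtain rfl | hdm := hdm.eq_or_lt
  · simp only [add_mod_right, mod_self, mod_eq_of_lt (by omega : k < d)] at h
    omega
  · rw [mod_eq_of_lt hdm] at h
    rcases h with ⟨-, rfl⟩ | ⟨hkd, rfl⟩
    · omega
    · have := le_of_dvd (by omega) (dvd_of_mod_eq_zero hkd)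
      omega

end Nat

theorem stmt_1 (m k k' : ℕ) (hm : 0 < m) (hk : k ≤ m / 2) (hk' : k' ≤ m / 2) :
    (∃ d, 0 < d ∧ d ≤ m ∧ (3 ^ k + 1) * 3 ^ d ≡ 3 ^ k' + 1 [MOD 3 ^ m - 1]) ↔ k = k' := by
  constructor
  · rintro ⟨d, hd, hdm, h⟩
    rcases lt_or_ge m 2 with hm1 | hm2
    · omega
    exact Nat.eq_of_mod_pair_eq hd hdm hk hk'
      (Nat.mod_pair_of_pow_add_one_mul_pow_modEq le_rfl hm2 (by omega) h)
  · rintro rfl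
    refine ⟨m, hm, le_rfl, ?_⟩
    simpa using ((Nat.modEq_sub (Nat.one_le_pow m 3 (by norm_num))).mul_left (3 ^ k + 1))
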